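/- arXiv:2101.02615 — 2 statements merged into one kernel-verified Lean document; each statement's English description precedes it below -/
import Mathlib

section
/- For 0 < p < 1 and integer m ≥ 1, with r = 1-p and D = p - r^m·(p + (m-1)p² - r^(m+1) - p·r), the values π(1) = r^(2m+1)/D, π(m+1) = p·r^(2m)/D, π(e) = p²·r^(3m-e+1)/D for each integer e with m+2 ≤ e ≤ 2m, and π(2m+1) = p·(1 - r^m·(1+(m-1)p))/D sum to 1. -/
/-!
The four numerators add up to `D` itself. Substituting `e ↦ 3m + 1 - e`, the middle terms form
the geometric sum `p² (r^(m+1) + ⋯ + r^(2m-1)) = p (r^(m+1) - r^(2m))`, and expanding `D` shows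
`D = r^(2m+1) + p r^(2m) + p (r^(m+1) - r^(2m)) + p (1 - r^m (1 + (m-1) p))`.
It remains that `D ≠ 0`: every summand is nonnegative and the first is positive, the last one
by `r^m (1 + m p) ≤ r^m (1 + p)^m = (1 - p²)^m ≤ 1`.
-/

open Finset

theorem sum_Icc_reflect {M : Type*} [AddCommMonoid M] (f : ℕ → M) (m : ℕ) :
    ∑ e ∈ Icc (m + 2) (2 * m), f (3 * m + 1 - e) = ∑ k ∈ Ico (m + 1) (2 * m), f k := by
  rw [← Ico_add_one_right_eq_Icc, sum_Ico_reflect f _ (by omega)]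
  congr 2 <;> omega

theorem one_sub_mul_sum_Icc_pow {R : Type*} [CommRing R] (r : R) {m : ℕ} (hm : 1 ≤ m) :
    (1 - r) * ∑ e ∈ Icc (m + 2) (2 * m), r ^ (3 * m + 1 - e) = r ^ (m + 1) - r ^ (2 * m) := by
  rw [sum_Icc_reflect (r ^ ·), mul_comm, geom_sum_Ico_mul_neg r (by omega)]

theorem one_sub_pow_mul_one_add_mul_le_one {p : ℝ} (hp0 : -1 ≤ p) (hp1 : p ≤ 1) (m : ℕ) :
    (1 - p) ^ m * (1 + m * p) ≤ 1 :=
  calc (1 - p) ^ m * (1 + m * p)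
      ≤ (1 - p) ^ m * (1 + p) ^ m :=
        mul_le_mul_of_nonneg_left (one_add_mul_le_pow (by linarith) m)
          (pow_nonneg (by linarith) m)
    _ = (1 - p ^ 2) ^ m := by rw [← mul_pow]; ring
    _ ≤ 1 := pow_le_one₀ (by nlinarith) (by nlinarith)

theorem stmt_4 (p : ℝ) (m : ℕ) (hm : 1 ≤ m) (hp : 0 < p) (hp1 : p < 1)
    (r D : ℝ) (hr : r = 1 - p)
    (hD : D = p - r^m * (p + ((m:ℝ)-1)*p^2 - r^(m+1) - p*r)) :
    r^(2*m+1)/D + p*r^(2*m)/D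
      + (∑ e ∈ Finset.Icc (m+2) (2*m), p^2 * r^(3*m+1-e) / D)
      + p*(1 - r^m*(1+((m:ℝ)-1)*p))/D = 1 := by
  have hr0 : 0 < r := by linarith
  have hr1 : r ≤ 1 := by linarith
  have h_middle : p * ∑ e ∈ Icc (m + 2) (2 * m), r ^ (3 * m + 1 - e)
      = r ^ (m + 1) - r ^ (2 * m) := by
    rw [show p = 1 - r by linarith, one_sub_mul_sum_Icc_pow r hm]
  have hD_eq : D = r ^ (2 * m + 1) + p * r ^ (2 * m) + p * (r ^ (m + 1) - r ^ (2 * m))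
      + p * (1 - r ^ m * (1 + ((m : ℝ) - 1) * p)) := by
    rw [hD]; ring
  have h_last : r ^ m * (1 + ((m : ℝ) - 1) * p) ≤ 1 := by
    have := one_sub_pow_mul_one_add_mul_le_one (p := p) (by linarith) hp1.le m
    rw [← hr] at this
    nlinarith [pow_pos hr0 m]
  have h_mono : r ^ (2 * m) ≤ r ^ (m + 1) := pow_le_pow_of_le_one hr0.le hr1 (by omega)
  have hD_pos : 0 < D := by
    rw [hD_eq]
    have := pow_pos hr0 (2 * m + 1)
    have := pow_pos hr0 (2 * m)
    nlinarith
  rw [← sum_div, ← mul_sum, ← add_div, ← add_div, ← add_div,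
    div_eq_one_iff_eq hD_pos.ne', hD_eq, ← h_middle]
  ring
end

section
/- For 0 < p < 1 and integer m ≥ 1, with r = 1-p, the steady-state distribution π of the k=2 model (π(1)=r^(2m+1)/D, π(m+1)=p·r^(2m)/D, π(e)=p²·r^(3m-e+1)/D for m+2 ≤ e ≤ 2m, π(2m+1)=p·(1-r^m(1+(m-1)p))/D, D = p - r^m(p+(m-1)p²-r^(m+1)-pr)) assigns a strictly positive probability to every state in {1, m+1, m+2, ..., 2m+1}. -/
/-! Put `r = 1 - p`. Since `p - p r = p²`, the normalising constant simplifies to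
`D = p (1 - m p r^m) + r^(2m+1)`, and Bernoulli's inequality in the form `r^m (1 + m p) ≤ 1`
gives `m p r^m ≤ 1 - r^m < 1`, so `D > 0`. The same inequality bounds `r^m (1 + (m-1) p)`
strictly below `1`, and every other numerator is a product of positive powers of `p` and `r`. -/

lemma one_sub_pow_mul_one_add_mul_le_one_s12 {R : Type*} [CommRing R] [LinearOrder R]
    [IsStrictOrderedRing R] {p : R} (hp1 : p ≤ 1) (n : ℕ) :
    (1 - p) ^ n * (1 + n * p) ≤ 1 := by
  induction n with
  | zero => simp
  | succ n ih =>
    have hpow : 0 ≤ (1 - p) ^ n := pow_nonneg (sub_nonneg.mpr hp1) n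
    calc (1 - p) ^ (n + 1) * (1 + (n + 1 : ℕ) * p)
        = (1 - p) ^ n * (1 + n * p) - (1 - p) ^ n * ((n + 1) * p ^ 2) := by push_cast; ring
      _ ≤ 1 := by
        have : 0 ≤ (1 - p) ^ n * ((n + 1) * p ^ 2) := by positivity
        linarith

lemma one_sub_pow_mul_one_add_pred_mul_lt_one {p : ℝ} (hp : 0 < p) (hp1 : p < 1) (m : ℕ) :
    (1 - p) ^ m * (1 + ((m : ℝ) - 1) * p) < 1 := by
  have hrm : 0 < (1 - p) ^ m := pow_pos (by linarith) m
  calc (1 - p) ^ m * (1 + ((m : ℝ) - 1) * p) < (1 - p) ^ m * (1 + m * p) := by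
        gcongr; linarith
    _ ≤ 1 := one_sub_pow_mul_one_add_mul_le_one_s12 hp1.le m

lemma steadyState_denom_pos {p : ℝ} (hp : 0 < p) (hp1 : p < 1) (m : ℕ) :
    0 < p - (1 - p) ^ m * (p + ((m : ℝ) - 1) * p ^ 2 - (1 - p) ^ (m + 1) - p * (1 - p)) := by
  set r := 1 - p with hr
  have hr0 : 0 < r := by linarith
  have hsimp : p - r ^ m * (p + ((m : ℝ) - 1) * p ^ 2 - r ^ (m + 1) - p * r)
      = p * (1 - m * p * r ^ m) + r ^ (2 * m + 1) := by
    rw [hr]; ring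
  have hbern : r ^ m * (1 + m * p) ≤ 1 := one_sub_pow_mul_one_add_mul_le_one_s12 hp1.le m
  have hrm : 0 < r ^ m := pow_pos hr0 m
  rw [hsimp]
  have : 0 < 1 - m * p * r ^ m := by linarith
  positivity

theorem stmt_12_general (p : ℝ) (m : ℕ) (hp : 0 < p) (hp1 : p < 1)
    (r D : ℝ) (hr : r = 1 - p)
    (hD : D = p - r^m * (p + ((m:ℝ)-1)*p^2 - r^(m+1) - p*r)) :
    0 < r^(2*m+1)/D ∧ 0 < p*r^(2*m)/D ∧
    (∀ e : ℕ, m+2 ≤ e → e ≤ 2*m → 0 < p^2 * r^(3*m+1-e) / D) ∧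
    0 < p*(1 - r^m*(1+((m:ℝ)-1)*p))/D := by
  have hr0 : 0 < r := by rw [hr]; linarith
  have hD0 : 0 < D := by rw [hD, hr]; exact steadyState_denom_pos hp hp1 m
  have hlast : 0 < 1 - r ^ m * (1 + ((m : ℝ) - 1) * p) := by
    rw [hr]; linarith [one_sub_pow_mul_one_add_pred_mul_lt_one hp hp1 m]
  exact ⟨by positivity, by positivity, fun e _ _ => by positivity, by positivity⟩

theorem stmt_12 (p : ℝ) (m : ℕ) (hm : 1 ≤ m) (hp : 0 < p) (hp1 : p < 1)
    (r D : ℝ) (hr : r = 1 - p)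
    (hD : D = p - r^m * (p + ((m:ℝ)-1)*p^2 - r^(m+1) - p*r)) :
    0 < r^(2*m+1)/D ∧ 0 < p*r^(2*m)/D ∧
    (∀ e : ℕ, m+2 ≤ e → e ≤ 2*m → 0 < p^2 * r^(3*m+1-e) / D) ∧
    0 < p*(1 - r^m*(1+((m:ℝ)-1)*p))/D :=
  stmt_12_general p m hp hp1 r D hr hD
end
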